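/- arXiv:1608.08547 — 3 statements merged into one kernel-verified Lean document; each statement's English description precedes it below -/
import Mathlib

section
/- For any positive integers p, q, c, the complete bipartite graph K_{p,q} is a graph minor of the Chimera graph F(⌈q/c⌉, ⌈p/c⌉, c). -/
/-- Ceiling division `⌈a/b⌉` on naturals. -/
def ceilDiv (a b : ℕ) : ℕ := (a + b - 1) / b

/-- The Chimera graph `F(r,s,c)`: an `r × s` grid of `K_{c,c}` cells.  A vertex
`(row, col, side, idx)` has `side = false` for the "left" half of its cell and
`side = true` for the "right" half.  Within a cell the two sides are completely joined;
left vertices are joined to the corresponding left vertices of vertically adjacent cells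
and right vertices to the corresponding right vertices of horizontally adjacent cells. -/
def chimera (r s c : ℕ) : SimpleGraph (Fin r × Fin s × Bool × Fin c) where
  Adj v w :=
    (v.1 = w.1 ∧ v.2.1 = w.2.1 ∧ v.2.2.1 ≠ w.2.2.1) ∨
    (v.2.2.1 = false ∧ w.2.2.1 = false ∧ v.2.1 = w.2.1 ∧ v.2.2.2 = w.2.2.2 ∧
      ((v.1 : ℕ) + 1 = w.1 ∨ (w.1 : ℕ) + 1 = v.1)) ∨
    (v.2.2.1 = true ∧ w.2.2.1 = true ∧ v.1 = w.1 ∧ v.2.2.2 = w.2.2.2 ∧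
      ((v.2.1 : ℕ) + 1 = w.2.1 ∨ (w.2.1 : ℕ) + 1 = v.2.1))
  symm := by
    constructor
    rintro v w (⟨h1, h2, h3⟩ | ⟨h1, h2, h3, h4, h5⟩ | ⟨h1, h2, h3, h4, h5⟩)
    · exact Or.inl ⟨h1.symm, h2.symm, h3.symm⟩
    · exact Or.inr (Or.inl ⟨h2, h1, h3.symm, h4.symm, h5.symm⟩)
    · exact Or.inr (Or.inr ⟨h2, h1, h3.symm, h4.symm, h5.symm⟩)
  loopless := by
    constructor
    rintro v (⟨_, _, h⟩ | ⟨_, _, _, _, h | h⟩ | ⟨_, _, _, _, h | h⟩)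
    · exact h rfl
    all_goals omega

/-- The complete bipartite graph `K_{p,q}`. -/
def completeBipartite (p q : ℕ) : SimpleGraph (Fin p ⊕ Fin q) where
  Adj u v := u.isLeft ≠ v.isLeft
  symm := ⟨fun _ _ h => h.symm⟩
  loopless := ⟨fun _ h => h rfl⟩

/-- `G` is a minor of `G'`: each vertex of `G` maps to a nonempty connected subtree
(equivalently, connected vertex set) of `G'`, the sets for distinct vertices are disjoint,
and each edge of `G` is realized by an edge of `G'` between the corresponding sets. -/
def IsMinorOf {α β : Type*} (G : SimpleGraph α) (G' : SimpleGraph β) : Prop :=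
  ∃ φ : α → Set β,
    (∀ v, (φ v).Nonempty) ∧
    (∀ v, (G'.induce (φ v)).Connected) ∧
    (∀ u v, u ≠ v → Disjoint (φ u) (φ v)) ∧
    (∀ u v, G.Adj u v → ∃ a ∈ φ u, ∃ b ∈ φ v, G'.Adj a b)

/-- The chained-OR gadget graph `L_n`: vertices `t₁,…,t_n` (as `Sum.inl`, 0-indexed) and
`x₁,…,x_{n-1}` (as `Sum.inr`, 0-indexed), with edges `(t₁,t₂), (t₁,x₁), (t₂,x₁)` and, for
`i = 2,…,n-1`, `(x_{i-1},x_i), (x_{i-1},t_{i+1}), (x_i,t_{i+1})`. -/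
def Ln (n : ℕ) : SimpleGraph (Fin n ⊕ Fin (n - 1)) where
  Adj u v :=
    match u, v with
    | Sum.inl t, Sum.inl t' => ((t : ℕ) = 0 ∧ (t' : ℕ) = 1) ∨ ((t : ℕ) = 1 ∧ (t' : ℕ) = 0)
    | Sum.inl t, Sum.inr x =>
        ((t : ℕ) ≤ 1 ∧ (x : ℕ) = 0) ∨ (2 ≤ (t : ℕ) ∧ ((x : ℕ) + 2 = t ∨ (x : ℕ) + 1 = t))
    | Sum.inr x, Sum.inl t =>
        ((t : ℕ) ≤ 1 ∧ (x : ℕ) = 0) ∨ (2 ≤ (t : ℕ) ∧ ((x : ℕ) + 2 = t ∨ (x : ℕ) + 1 = t))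
    | Sum.inr x, Sum.inr x' => (x : ℕ) + 1 = x' ∨ (x' : ℕ) + 1 = x
  symm := by
    constructor
    rintro (t | x) (t' | x') h <;> dsimp only at h ⊢ <;> tauto
  loopless := by
    constructor
    rintro (t | x) h <;> dsimp only at h <;> omega

/-!
Number the vertices of the `p`-side of `K_{p,q}` as pairs (column, index) with `⌈p/c⌉`
columns and `c` indices, and those of the `q`-side as pairs (row, index). The `p`-vertex
`(col, k)` becomes the vertical path of left vertices with index `k` through all cells of
column `col`, and the `q`-vertex `(row, k')` the horizontal path of right vertices with
index `k'` through all cells of row `row`. Any such vertical and horizontal path meet in the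
cell `(row, col)`, whose complete bipartite graph joins them.
-/

lemma ceilDiv_pos {n c : ℕ} (hc : 0 < c) (hn : 0 < n) : 0 < ceilDiv n c :=
  Nat.div_pos (by omega) hc

lemma le_ceilDiv_mul (n : ℕ) {c : ℕ} (hc : 0 < c) : n ≤ ceilDiv n c * c := by
  have := Nat.lt_div_mul_add (a := n + c - 1) hc
  unfold ceilDiv
  omega

namespace SimpleGraph

variable {V W : Type*} {G : SimpleGraph V} {H : SimpleGraph W}

lemma Connected.induce_range (f : H →g G) (hH : H.Connected) :
    (G.induce (Set.range f)).Connected :=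
  hH.map ⟨fun w => ⟨f w, w, rfl⟩, fun h => f.map_rel h⟩ (by rintro ⟨_, w, rfl⟩; exact ⟨w, rfl⟩)

lemma induce_range_pathGraph_connected {n : ℕ} (hn : 0 < n) (f : pathGraph n →g G) :
    (G.induce (Set.range f)).Connected := by
  obtain ⟨m, rfl⟩ := Nat.exists_eq_add_one_of_ne_zero hn.ne'
  exact (pathGraph_connected m).induce_range f

end SimpleGraph

namespace Chimera

open SimpleGraph

variable {r s c : ℕ}

@[simps]
def colPath (col : Fin s) (k : Fin c) : pathGraph r →g chimera r s c where
  toFun row := (row, col, false, k)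
  map_rel' h := Or.inr <| Or.inl ⟨rfl, rfl, rfl, rfl, pathGraph_adj.mp h⟩

@[simps]
def rowPath (row : Fin r) (k : Fin c) : pathGraph s →g chimera r s c where
  toFun col := (row, col, true, k)
  map_rel' h := Or.inr <| Or.inr ⟨rfl, rfl, rfl, rfl, pathGraph_adj.mp h⟩

lemma colPath_adj_rowPath (col : Fin s) (k : Fin c) (row : Fin r) (k' : Fin c) :
    (chimera r s c).Adj (colPath col k row) (rowPath row k' col) :=
  Or.inl ⟨rfl, rfl, Bool.false_ne_true⟩

lemma disjoint_range_colPath {col col' : Fin s} {k k' : Fin c} (h : (col, k) ≠ (col', k')) :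
    Disjoint (Set.range (colPath (r := r) col k)) (Set.range (colPath col' k')) :=
  Set.disjoint_range_iff.mpr fun _ _ he => h (by simp_all)

lemma disjoint_range_rowPath {row row' : Fin r} {k k' : Fin c} (h : (row, k) ≠ (row', k')) :
    Disjoint (Set.range (rowPath (s := s) row k)) (Set.range (rowPath row' k')) :=
  Set.disjoint_range_iff.mpr fun _ _ he => h (by simp_all)

lemma disjoint_range_colPath_rowPath (col : Fin s) (row : Fin r) (k k' : Fin c) :
    Disjoint (Set.range (colPath col k)) (Set.range (rowPath row k')) :=
  Set.disjoint_range_iff.mpr fun _ _ he => by simp at he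

end Chimera

open Chimera SimpleGraph in
theorem isMinorOf_completeBipartite_chimera {p q r s c : ℕ} (hr : 0 < r) (hs : 0 < s)
    (hp : p ≤ s * c) (hq : q ≤ r * c) :
    IsMinorOf (completeBipartite p q) (chimera r s c) := by
  let f : Fin p ↪ Fin s × Fin c := (Fin.castLEEmb hp).trans finProdFinEquiv.symm.toEmbedding
  let g : Fin q ↪ Fin r × Fin c := (Fin.castLEEmb hq).trans finProdFinEquiv.symm.toEmbedding
  refine ⟨Sum.elim (fun i => Set.range (colPath (f i).1 (f i).2))
    (fun j => Set.range (rowPath (g j).1 (g j).2)), ?_, ?_, ?_, ?_⟩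
  · rintro (i | j)
    · exact ⟨_, ⟨0, hr⟩, rfl⟩
    · exact ⟨_, ⟨0, hs⟩, rfl⟩
  · rintro (i | j)
    · exact induce_range_pathGraph_connected hr _
    · exact induce_range_pathGraph_connected hs _
  · rintro (i | j) (i' | j') hne
    · exact disjoint_range_colPath (f.injective.ne fun h => hne (congrArg Sum.inl h))
    · exact disjoint_range_colPath_rowPath _ _ _ _
    · exact (disjoint_range_colPath_rowPath _ _ _ _).symm
    · exact disjoint_range_rowPath (g.injective.ne fun h => hne (congrArg Sum.inr h))
  · rintro (i | j) (i' | j') hadj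
    · exact absurd rfl hadj
    · exact ⟨_, ⟨(g j').1, rfl⟩, _, ⟨(f i).1, rfl⟩, colPath_adj_rowPath _ _ _ _⟩
    · exact ⟨_, ⟨(f i').1, rfl⟩, _, ⟨(g j).1, rfl⟩, (colPath_adj_rowPath _ _ _ _).symm⟩
    · exact absurd rfl hadj

/-- For any positive integers `p`, `q`, `c`, the complete bipartite graph
`K_{p,q}` is a minor of the Chimera graph `F(⌈q/c⌉, ⌈p/c⌉, c)`. -/
theorem stmt_8 (p q c : ℕ) (hp : 0 < p) (hq : 0 < q) (hc : 0 < c) :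
    IsMinorOf (completeBipartite p q) (chimera (ceilDiv q c) (ceilDiv p c) c) :=
  isMinorOf_completeBipartite_chimera (ceilDiv_pos hc hq) (ceilDiv_pos hc hp)
    (le_ceilDiv_mul p hc) (le_ceilDiv_mul q hc)
end

section
/- For any positive integer n, the graph L_n is a graph minor of the Chimera graph F(⌈2n/4⌉, 2, 4). -/
/-!
Everything happens in one column of the Chimera graph. With the 0-indexing of `Ln`, `t 0` is the
left vertex 2 of row 0 and `t i` (`i ≥ 1`) the right vertex `2 + i % 2` of row `(i - 1) / 2`;
`x i` takes the right vertex `i % 2` of row `i / 2` and the left vertices `i % 4` of rows `i / 2`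
and `(i + 1) / 2`, which for odd `i` are joined by a vertical edge. Each edge of `L_n` then joins a
left and a right vertex of a single cell. The branch sets are disjoint because the position of a
used vertex determines the vertex of `L_n` it belongs to.
-/

theorem chimera_adj_of_row_eq {r s c : ℕ} {v w : Fin r × Fin s × Bool × Fin c}
    (hrow : (v.1 : ℕ) = w.1) (hcol : v.2.1 = w.2.1) (hside : v.2.2.1 ≠ w.2.2.1) :
    (chimera r s c).Adj v w :=
  Or.inl ⟨Fin.ext hrow, hcol, hside⟩

theorem chimera_adj_of_row_succ {r s c : ℕ} {v w : Fin r × Fin s × Bool × Fin c}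
    (hrow : (v.1 : ℕ) + 1 = w.1) (hcol : v.2.1 = w.2.1) (hv : v.2.2.1 = false)
    (hw : w.2.2.1 = false) (hidx : v.2.2.2 = w.2.2.2) :
    (chimera r s c).Adj v w :=
  Or.inr (Or.inl ⟨hv, hw, hcol, hidx, Or.inl hrow⟩)

theorem SimpleGraph.induce_connected_of_forall_eq_or_adj {V : Type*} (G : SimpleGraph V)
    {S : Set V} {a : V} (ha : a ∈ S) (h : ∀ v ∈ S, v = a ∨ G.Adj a v) :
    (G.induce S).Connected := by
  rw [SimpleGraph.connected_iff_exists_forall_reachable]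
  refine ⟨⟨a, ha⟩, fun ⟨v, hv⟩ => ?_⟩
  rcases h v hv with rfl | hav
  · rfl
  · exact SimpleGraph.Adj.reachable (by simpa using hav)

namespace ChainedOr

variable {n r s c : ℕ} (hr : n ≤ 2 * r) (hc : 4 ≤ c) (j : Fin s)

-- For `t = 0` the row `(t - 1) / 2` is `0` by truncated subtraction.
def tVertex (t : Fin n) : Fin r × Fin s × Bool × Fin c :=
  (⟨((t : ℕ) - 1) / 2, by omega⟩, j, decide ((t : ℕ) ≠ 0), ⟨2 + (t : ℕ) % 2, by omega⟩)

def xLower (x : Fin (n - 1)) : Fin r × Fin s × Bool × Fin c :=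
  (⟨(x : ℕ) / 2, by omega⟩, j, false, ⟨(x : ℕ) % 4, by omega⟩)

def xUpper (x : Fin (n - 1)) : Fin r × Fin s × Bool × Fin c :=
  (⟨((x : ℕ) + 1) / 2, by omega⟩, j, false, ⟨(x : ℕ) % 4, by omega⟩)

def xRight (x : Fin (n - 1)) : Fin r × Fin s × Bool × Fin c :=
  (⟨(x : ℕ) / 2, by omega⟩, j, true, ⟨(x : ℕ) % 2, by omega⟩)

def branchSet : Fin n ⊕ Fin (n - 1) → Set (Fin r × Fin s × Bool × Fin c)
  | .inl t => {tVertex hr hc j t}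
  | .inr x => {xLower hr hc j x, xUpper hr hc j x, xRight hr hc j x}

-- A left vertex of odd index `i` in row `k` lies on the chain of the odd `x ∈ {2k - 1, 2k + 1}`
-- with `x % 4 = i`.
def owner : Fin r × Fin s × Bool × Fin c → ℕ ⊕ ℕ
  | (k, _, true, i) => if (i : ℕ) < 2 then .inr (2 * k + i) else .inl (2 * k + 4 - i)
  | (k, _, false, i) =>
    if (k : ℕ) = 0 ∧ (i : ℕ) = 2 then .inl 0
    else if (i : ℕ) % 2 = 0 then .inr (2 * k)
    else if (k + (i : ℕ) / 2) % 2 = 0 then .inr (2 * k + 1) else .inr (2 * k - 1)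

theorem owner_tVertex (t : Fin n) : owner (tVertex hr hc j t) = .inl (t : ℕ) := by
  by_cases ht : (t : ℕ) = 0
  · simp [owner, tVertex, ht]
  · simp only [owner, tVertex, ht, ne_eq, not_false_eq_true, decide_true]
    split_ifs <;> grind

theorem owner_xLower (x : Fin (n - 1)) : owner (xLower hr hc j x) = .inr (x : ℕ) := by
  simp only [owner, xLower]
  split_ifs <;> grind

theorem owner_xUpper (x : Fin (n - 1)) : owner (xUpper hr hc j x) = .inr (x : ℕ) := by
  simp only [owner, xUpper]
  split_ifs <;> grind

theorem owner_xRight (x : Fin (n - 1)) : owner (xRight hr hc j x) = .inr (x : ℕ) := by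
  simp only [owner, xRight]
  split_ifs <;> grind

theorem owner_of_mem_branchSet {v : Fin n ⊕ Fin (n - 1)} {w : Fin r × Fin s × Bool × Fin c}
    (hw : w ∈ branchSet hr hc j v) : owner w = Sum.map Fin.val Fin.val v := by
  rcases v with t | x
  · obtain rfl := hw
    exact owner_tVertex hr hc j t
  · obtain rfl | rfl | rfl := hw
    · exact owner_xLower hr hc j x
    · exact owner_xUpper hr hc j x
    · exact owner_xRight hr hc j x

theorem disjoint_branchSet {u v : Fin n ⊕ Fin (n - 1)} (huv : u ≠ v) :
    Disjoint (branchSet hr hc j u) (branchSet hr hc j v) := by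
  have hsub : ∀ v, branchSet hr hc j v ⊆ owner ⁻¹' {Sum.map Fin.val Fin.val v} :=
    fun v _ hw => owner_of_mem_branchSet hr hc j hw
  have hinj : Function.Injective (Sum.map (Fin.val (n := n)) (Fin.val (n := n - 1))) :=
    Sum.map_injective.2 ⟨Fin.val_injective, Fin.val_injective⟩
  exact ((Set.disjoint_singleton.2 (hinj.ne huv)).preimage owner).mono (hsub u) (hsub v)

theorem xUpper_eq_or_adj (x : Fin (n - 1)) :
    xUpper hr hc j x = xLower hr hc j x ∨
      (chimera r s c).Adj (xLower hr hc j x) (xUpper hr hc j x) := by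
  rcases Nat.even_or_odd (x : ℕ) with hx | hx
  · left
    simp only [xUpper, xLower, Prod.mk.injEq, Fin.mk.injEq, and_true]
    grind
  · right
    exact chimera_adj_of_row_succ (by simp only [xUpper, xLower]; grind) rfl rfl rfl rfl

theorem adj_xLower_xRight (x : Fin (n - 1)) :
    (chimera r s c).Adj (xLower hr hc j x) (xRight hr hc j x) :=
  chimera_adj_of_row_eq rfl rfl (by simp [xLower, xRight])

theorem connected_branchSet (v : Fin n ⊕ Fin (n - 1)) :
    ((chimera r s c).induce (branchSet hr hc j v)).Connected := by
  rcases v with t | x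
  · simp only [branchSet, SimpleGraph.induce_singleton_eq_top]
    exact SimpleGraph.connected_top
  · refine (chimera r s c).induce_connected_of_forall_eq_or_adj (a := xLower hr hc j x)
      (by simp [branchSet]) ?_
    rintro w (rfl | rfl | rfl)
    · exact Or.inl rfl
    · exact xUpper_eq_or_adj hr hc j x
    · exact Or.inr (adj_xLower_xRight hr hc j x)

theorem adj_tVertex_tVertex {t t' : Fin n} (ht : (t : ℕ) = 0) (ht' : (t' : ℕ) = 1) :
    (chimera r s c).Adj (tVertex hr hc j t) (tVertex hr hc j t') :=
  chimera_adj_of_row_eq (by simp [tVertex, ht, ht']) rfl (by simp [tVertex, ht, ht'])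

theorem adj_tVertex_xRight {t : Fin n} {x : Fin (n - 1)} (ht : (t : ℕ) = 0) (hx : (x : ℕ) = 0) :
    (chimera r s c).Adj (tVertex hr hc j t) (xRight hr hc j x) :=
  chimera_adj_of_row_eq (by simp [tVertex, xRight, ht, hx]) rfl (by simp [tVertex, xRight, ht])

theorem adj_tVertex_xLower {t : Fin n} {x : Fin (n - 1)} (h : (x : ℕ) + 1 = t) :
    (chimera r s c).Adj (tVertex hr hc j t) (xLower hr hc j x) :=
  chimera_adj_of_row_eq (by simp only [tVertex, xLower]; omega) rfl
    (by simp [tVertex, xLower]; omega)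

theorem adj_tVertex_xUpper {t : Fin n} {x : Fin (n - 1)} (h : (x : ℕ) + 2 = t) :
    (chimera r s c).Adj (tVertex hr hc j t) (xUpper hr hc j x) :=
  chimera_adj_of_row_eq (by simp only [tVertex, xUpper]; omega) rfl
    (by simp [tVertex, xUpper]; omega)

theorem adj_xUpper_xRight {x x' : Fin (n - 1)} (h : (x : ℕ) + 1 = x') :
    (chimera r s c).Adj (xUpper hr hc j x) (xRight hr hc j x') :=
  chimera_adj_of_row_eq (by simp only [xUpper, xRight]; omega) rfl (by simp [xUpper, xRight])

theorem exists_adj_of_adj {u v : Fin n ⊕ Fin (n - 1)} (huv : (Ln n).Adj u v) :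
    ∃ a ∈ branchSet hr hc j u, ∃ b ∈ branchSet hr hc j v, (chimera r s c).Adj a b := by
  have swap : ∀ {u v}, (∃ a ∈ branchSet hr hc j u, ∃ b ∈ branchSet hr hc j v,
      (chimera r s c).Adj a b) →
      ∃ a ∈ branchSet hr hc j v, ∃ b ∈ branchSet hr hc j u, (chimera r s c).Adj a b :=
    fun ⟨a, ha, b, hb, hab⟩ => ⟨b, hb, a, ha, hab.symm⟩
  have tx : ∀ (t : Fin n) (x : Fin (n - 1)), (Ln n).Adj (.inl t) (.inr x) →
      ∃ a ∈ branchSet hr hc j (.inl t), ∃ b ∈ branchSet hr hc j (.inr x),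
        (chimera r s c).Adj a b := by
    rintro t x (⟨ht, hx⟩ | ⟨-, hxt | hxt⟩)
    · obtain ht | ht : (t : ℕ) = 0 ∨ (x : ℕ) + 1 = t := by omega
      · exact ⟨_, rfl, _, by simp [branchSet], adj_tVertex_xRight hr hc j ht hx⟩
      · exact ⟨_, rfl, _, by simp [branchSet], adj_tVertex_xLower hr hc j ht⟩
    · exact ⟨_, rfl, _, by simp [branchSet], adj_tVertex_xUpper hr hc j hxt⟩
    · exact ⟨_, rfl, _, by simp [branchSet], adj_tVertex_xLower hr hc j hxt⟩
  have xx : ∀ x x' : Fin (n - 1), (x : ℕ) + 1 = x' →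
      ∃ a ∈ branchSet hr hc j (.inr x), ∃ b ∈ branchSet hr hc j (.inr x'),
        (chimera r s c).Adj a b :=
    fun x x' h => ⟨_, by simp [branchSet], _, by simp [branchSet], adj_xUpper_xRight hr hc j h⟩
  rcases u with t | x <;> rcases v with t' | x'
  · rcases huv with ⟨ht, ht'⟩ | ⟨ht', ht⟩
    · exact ⟨_, rfl, _, rfl, adj_tVertex_tVertex hr hc j ht ht'⟩
    · exact swap ⟨_, rfl, _, rfl, adj_tVertex_tVertex hr hc j ht ht'⟩
  · exact tx t x' huv
  · exact swap (tx t' x huv.symm)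
  · rcases huv with h | h
    · exact xx x x' h
    · exact swap (xx x' x h)

theorem nonempty_branchSet (v : Fin n ⊕ Fin (n - 1)) : (branchSet hr hc j v).Nonempty := by
  cases v <;> simp [branchSet]

end ChainedOr

open ChainedOr in
theorem Ln_isMinorOf_chimera {n r s c : ℕ} (hr : n ≤ 2 * r) (hs : 0 < s) (hc : 4 ≤ c) :
    IsMinorOf (Ln n) (chimera r s c) :=
  let j : Fin s := ⟨0, hs⟩
  ⟨branchSet hr hc j, nonempty_branchSet hr hc j, connected_branchSet hr hc j,
    fun _ _ => disjoint_branchSet hr hc j, fun _ _ => exists_adj_of_adj hr hc j⟩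

theorem stmt_10_general (n : ℕ) :
    IsMinorOf (Ln n) (chimera (ceilDiv (2 * n) 4) 2 4) :=
  Ln_isMinorOf_chimera (by unfold ceilDiv; omega) two_pos le_rfl

/-- For any positive integer `n`, the chained-OR gadget graph `L_n` is a
minor of the Chimera graph `F(⌈2n/4⌉, 2, 4)`. -/
theorem stmt_10 (n : ℕ) (hn : 0 < n) :
    IsMinorOf (Ln n) (chimera (ceilDiv (2 * n) 4) 2 4) :=
  stmt_10_general n
end

section
/- The complete graph on cm+1 vertices is a minor of the Chimera graph F(m, m, c); consequently every graph on at most cm+1 vertices is a minor of F(m, m, c). -/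
/-!
Number rows, columns and indices from `0`. The branch set of clique vertex `(k, j)` is the
`L`-shaped path of index-`j` vertices going down the left column `k` from the diagonal cell
`(k, k)` and left along the right row `k` from it. For `k ≤ k'` the paths of `(k, j)` and
`(k', j')` meet in cell `(k', k)`, one through a left vertex and the other through a right one,
so the `cm` paths give a `K_{cm}` minor. The cells strictly above the diagonal are unused, form a
connected set and touch every path; together with the last left vertex of the bottom-right cell,
taken from the path of `(m-1, c-1)`, they are the branch set of one more clique vertex.
-/

theorem SimpleGraph.induce_connected_of_descent {V : Type*} (G : SimpleGraph V) (S : Set V)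
    {root : V} (hroot : root ∈ S) (f : V → ℕ)
    (h : ∀ a ∈ S, a ≠ root → ∃ b ∈ S, G.Adj a b ∧ f b < f a) :
    (G.induce S).Connected := by
  have reach : ∀ a : S, (G.induce S).Reachable a ⟨root, hroot⟩ := by
    intro a
    induction a using (measure (f ∘ Subtype.val)).wf.induction with
    | _ a ih =>
      by_cases ha : a.1 = root
      · rw [show a = ⟨root, hroot⟩ from Subtype.ext ha]
      · obtain ⟨b, hb, hab, hlt⟩ := h a a.2 ha
        exact (show (G.induce S).Adj a ⟨b, hb⟩ from hab).reachable.trans (ih ⟨b, hb⟩ hlt)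
  exact (SimpleGraph.connected_iff _).2
    ⟨fun a b => (reach a).trans (reach b).symm, ⟨⟨root, hroot⟩⟩⟩

theorem IsMinorOf.of_hom {α β γ : Type*} {G : SimpleGraph α} {G' : SimpleGraph β}
    {H : SimpleGraph γ} (f : G →g G') (hf : Function.Injective f) (h : IsMinorOf G' H) :
    IsMinorOf G H := by
  obtain ⟨φ, hne, hconn, hdisj, hadj⟩ := h
  exact ⟨φ ∘ f, fun v => hne _, fun v => hconn _,
    fun u v huv => hdisj _ _ (hf.ne huv), fun u v huv => hadj _ _ (f.map_rel huv)⟩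

theorem IsMinorOf.of_top_of_card_le {α β γ : Type*} [Fintype α] [Fintype β]
    {H : SimpleGraph γ} (h : IsMinorOf (⊤ : SimpleGraph β) H)
    (hcard : Fintype.card α ≤ Fintype.card β) (G : SimpleGraph α) : IsMinorOf G H := by
  obtain ⟨f⟩ := Function.Embedding.nonempty_of_card_le hcard
  exact h.of_hom ⟨f, fun hab => f.injective.ne hab.ne⟩ f.injective

theorem isMinorOf_of_connected_fibers {α β : Type*} {G : SimpleGraph α} {H : SimpleGraph β}
    (o : β → α) (hconn : ∀ v, (H.induce (o ⁻¹' {v})).Connected)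
    (hadj : ∀ u v, G.Adj u v → ∃ a b, H.Adj a b ∧ o a = u ∧ o b = v) :
    IsMinorOf G H := by
  refine ⟨fun v => o ⁻¹' {v}, fun v => ?_, hconn, fun u v huv => ?_, fun u v huv => ?_⟩
  · obtain ⟨⟨a, ha⟩⟩ := (hconn v).nonempty
    exact ⟨a, ha⟩
  · exact Disjoint.preimage o (Set.disjoint_singleton.2 huv)
  · obtain ⟨a, b, hab, rfl, rfl⟩ := hadj u v huv
    exact ⟨a, rfl, b, rfl, hab⟩

section chimera

variable {r s c : ℕ}

theorem chimera_adj_of_side_ne {x : Fin r} {y : Fin s} {b b' : Bool} (i i' : Fin c)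
    (hb : b ≠ b') :
    (chimera r s c).Adj (x, y, b, i) (x, y, b', i') :=
  Or.inl ⟨rfl, rfl, hb⟩

theorem chimera_adj_of_succ_row {x x' : Fin r} {y : Fin s} {i : Fin c} (h : (x : ℕ) + 1 = x') :
    (chimera r s c).Adj (x, y, false, i) (x', y, false, i) :=
  Or.inr (Or.inl ⟨rfl, rfl, rfl, rfl, Or.inl h⟩)

theorem chimera_adj_of_succ_col {x : Fin r} {y y' : Fin s} {i : Fin c} (h : (y : ℕ) + 1 = y') :
    (chimera r s c).Adj (x, y, true, i) (x, y', true, i) :=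
  Or.inr (Or.inr ⟨rfl, rfl, rfl, rfl, Or.inl h⟩)

end chimera

section clique

variable {m c : ℕ}

/-- The branch sets are the fibres of this map on `F(m+1, m+1, c+1)`; `none` is the extra clique
vertex. -/
def cliqueOwner :
    Fin (m + 1) × Fin (m + 1) × Bool × Fin (c + 1) → Option (Fin (m + 1) × Fin (c + 1))
  | (x, y, false, i) => if x < y ∨ (y = Fin.last m ∧ i = Fin.last c) then none else some (y, i)
  | (x, y, true, i) => if x < y then none else some (x, i)

variable {x y k : Fin (m + 1)} {i j : Fin (c + 1)}

theorem cliqueOwner_left_eq_some :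
    cliqueOwner (x, y, false, i) = some (k, j) ↔
      y = k ∧ i = j ∧ k ≤ x ∧ ¬(k = Fin.last m ∧ j = Fin.last c) := by
  grind [cliqueOwner]

theorem cliqueOwner_right_eq_some :
    cliqueOwner (x, y, true, i) = some (k, j) ↔ x = k ∧ i = j ∧ y ≤ k := by
  grind [cliqueOwner]

theorem cliqueOwner_left_eq_none :
    cliqueOwner (x, y, false, i) = none ↔ x < y ∨ (y = Fin.last m ∧ i = Fin.last c) := by
  grind [cliqueOwner]

theorem cliqueOwner_right_eq_none : cliqueOwner (x, y, true, i) = none ↔ x < y := by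
  grind [cliqueOwner]

theorem cliqueOwner_some_connected (k : Fin (m + 1)) (j : Fin (c + 1)) :
    ((chimera (m + 1) (m + 1) (c + 1)).induce (cliqueOwner ⁻¹' {some (k, j)})).Connected := by
  refine SimpleGraph.induce_connected_of_descent _ _ (root := (k, k, true, j))
    (cliqueOwner_right_eq_some.2 ⟨rfl, rfl, le_rfl⟩)
    (fun p => (p.1 : ℕ) - p.2.1 + if p.2.2.1 then 0 else 1) ?_
  rintro ⟨x, y, _ | _, i⟩ hp hne
  · obtain ⟨rfl, rfl, hkx, hlast⟩ := cliqueOwner_left_eq_some.1 hp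
    obtain rfl | hkx := hkx.eq_or_lt
    · exact ⟨_, cliqueOwner_right_eq_some.2 ⟨rfl, rfl, le_rfl⟩,
        chimera_adj_of_side_ne _ _ (by decide), by simp⟩
    · refine ⟨(⟨x - 1, by omega⟩, y, false, i),
        cliqueOwner_left_eq_some.2 ⟨rfl, rfl, by grind, hlast⟩,
        (chimera_adj_of_succ_row (by grind)).symm, by grind⟩
  · obtain ⟨rfl, rfl, hyx⟩ := cliqueOwner_right_eq_some.1 hp
    have hyx : (y : ℕ) < x := Fin.lt_def.1 (hyx.lt_of_ne (by rintro rfl; exact hne rfl))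
    exact ⟨(x, ⟨y + 1, by omega⟩, true, i),
      cliqueOwner_right_eq_some.2 ⟨rfl, rfl, by grind⟩,
      chimera_adj_of_succ_col rfl, by grind⟩

theorem cliqueOwner_none_connected :
    ((chimera (m + 1) (m + 1) (c + 1)).induce (cliqueOwner ⁻¹' {none})).Connected := by
  refine SimpleGraph.induce_connected_of_descent _ _
    (root := (Fin.last m, Fin.last m, false, Fin.last c))
    (cliqueOwner_left_eq_none.2 (Or.inr ⟨rfl, rfl⟩))
    -- distance to the corner: right to the last column, across to the last left vertex, down
    (fun p => if p.2.2.1 then (m - p.2.1) + (m - p.1) + 1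
      else if p.2.1 = Fin.last m ∧ p.2.2.2 = Fin.last c then m - p.1
      else (m - p.2.1) + (m - p.1) + 2) ?_
  rintro ⟨x, y, _ | _, i⟩ hp hne
  · by_cases hlast : y = Fin.last m ∧ i = Fin.last c
    · obtain ⟨rfl, rfl⟩ := hlast
      have hx : (x : ℕ) < m := Fin.val_lt_last (by rintro rfl; exact hne rfl)
      exact ⟨(⟨x + 1, by omega⟩, Fin.last m, false, Fin.last c),
        cliqueOwner_left_eq_none.2 (Or.inr ⟨rfl, rfl⟩), chimera_adj_of_succ_row rfl,
        by grind⟩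
    · have hxy := (cliqueOwner_left_eq_none.1 hp).resolve_right hlast
      exact ⟨(x, y, true, i), cliqueOwner_right_eq_none.2 hxy,
        chimera_adj_of_side_ne _ _ (by decide), by simp [hlast]⟩
  · have hxy := cliqueOwner_right_eq_none.1 hp
    by_cases hy : y = Fin.last m
    · subst hy
      exact ⟨(x, Fin.last m, false, Fin.last c),
        cliqueOwner_left_eq_none.2 (Or.inr ⟨rfl, rfl⟩), chimera_adj_of_side_ne _ _ (by decide),
        by simp⟩
    · have hy : (y : ℕ) < m := Fin.val_lt_last hy
      exact ⟨(x, ⟨y + 1, by omega⟩, true, i), cliqueOwner_right_eq_none.2 (by grind),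
        chimera_adj_of_succ_col rfl, by grind⟩

theorem exists_adj_cliqueOwner_some_some {k k' : Fin (m + 1)} (j j' : Fin (c + 1))
    (hk : k ≤ k') (hlast : ¬(k = Fin.last m ∧ j = Fin.last c)) :
    ∃ a b, (chimera (m + 1) (m + 1) (c + 1)).Adj a b ∧
      cliqueOwner a = some (k, j) ∧ cliqueOwner b = some (k', j') :=
  ⟨(k', k, false, j), (k', k, true, j'), chimera_adj_of_side_ne _ _ (by decide),
    cliqueOwner_left_eq_some.2 ⟨rfl, rfl, hk, hlast⟩, cliqueOwner_right_eq_some.2 ⟨rfl, rfl, hk⟩⟩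

theorem exists_adj_cliqueOwner_of_ne {k k' : Fin (m + 1)} {j j' : Fin (c + 1)}
    (h : (k, j) ≠ (k', j')) :
    ∃ a b, (chimera (m + 1) (m + 1) (c + 1)).Adj a b ∧
      cliqueOwner a = some (k, j) ∧ cliqueOwner b = some (k', j') := by
  have swap : ∀ {k k' : Fin (m + 1)} {j j' : Fin (c + 1)}, k' ≤ k →
      ¬(k' = Fin.last m ∧ j' = Fin.last c) →
        ∃ a b, (chimera (m + 1) (m + 1) (c + 1)).Adj a b ∧
          cliqueOwner a = some (k, j) ∧ cliqueOwner b = some (k', j') := by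
    intro k k' j j' hk hlast
    obtain ⟨a, b, hab, ha, hb⟩ := exists_adj_cliqueOwner_some_some j' j hk hlast
    exact ⟨b, a, hab.symm, hb, ha⟩
  rcases le_or_gt k k' with hk | hk
  · by_cases hlast : k = Fin.last m ∧ j = Fin.last c
    · obtain ⟨rfl, rfl⟩ := hlast
      obtain rfl := le_antisymm (Fin.le_last k') hk
      exact swap le_rfl fun h' => h (by rw [h'.2])
    · exact exists_adj_cliqueOwner_some_some j j' hk hlast
  · exact swap hk.le fun h' => (Fin.le_last k).not_gt (h'.1 ▸ hk)

theorem exists_adj_cliqueOwner_some_none (k : Fin (m + 1)) (j : Fin (c + 1)) :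
    ∃ a b, (chimera (m + 1) (m + 1) (c + 1)).Adj a b ∧
      cliqueOwner a = some (k, j) ∧ cliqueOwner b = none := by
  by_cases hk : k = Fin.last m
  · subst hk
    exact ⟨_, (Fin.last m, Fin.last m, false, Fin.last c), chimera_adj_of_side_ne _ _ (by decide),
      cliqueOwner_right_eq_some.2 ⟨rfl, rfl, le_rfl⟩,
      cliqueOwner_left_eq_none.2 (Or.inr ⟨rfl, rfl⟩)⟩
  · have hk : (k : ℕ) < m := Fin.val_lt_last hk
    exact ⟨_, (k, ⟨k + 1, by omega⟩, true, j), chimera_adj_of_succ_col rfl,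
      cliqueOwner_right_eq_some.2 ⟨rfl, rfl, le_rfl⟩,
      cliqueOwner_right_eq_none.2 (by grind)⟩

variable (m c) in
theorem isMinorOf_top_chimera :
    IsMinorOf (⊤ : SimpleGraph (Option (Fin (m + 1) × Fin (c + 1))))
      (chimera (m + 1) (m + 1) (c + 1)) := by
  refine isMinorOf_of_connected_fibers cliqueOwner ?_ ?_
  · rintro (_ | ⟨k, j⟩)
    exacts [cliqueOwner_none_connected, cliqueOwner_some_connected k j]
  · rintro (_ | ⟨k, j⟩) (_ | ⟨k', j'⟩) huv
    · exact absurd rfl huv.ne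
    · obtain ⟨a, b, hab, ha, hb⟩ := exists_adj_cliqueOwner_some_none k' j'
      exact ⟨b, a, hab.symm, hb, ha⟩
    · exact exists_adj_cliqueOwner_some_none k j
    · exact exists_adj_cliqueOwner_of_ne fun h => huv.ne (congrArg some h)

end clique

/-- The complete graph on `c*m + 1` vertices is a minor of the Chimera graph
`F(m, m, c)`; consequently every graph on at most `c*m + 1` vertices is a minor of
`F(m, m, c)`. -/
theorem stmt_11 (m c : ℕ) (hm : 0 < m) (hc : 0 < c) :
    IsMinorOf (⊤ : SimpleGraph (Fin (c * m + 1))) (chimera m m c) ∧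
    ∀ (V : Type) [Fintype V] (G : SimpleGraph V), Fintype.card V ≤ c * m + 1 →
      IsMinorOf G (chimera m m c) := by
  obtain ⟨m, rfl⟩ := Nat.exists_eq_add_one_of_ne_zero hm.ne'
  obtain ⟨c, rfl⟩ := Nat.exists_eq_add_one_of_ne_zero hc.ne'
  have hcard : Fintype.card (Option (Fin (m + 1) × Fin (c + 1))) = (c + 1) * (m + 1) + 1 := by
    simp [mul_comm]
  have hK := isMinorOf_top_chimera m c
  exact ⟨hK.of_top_of_card_le (by simp [hcard]) ⊤,
    fun V _ G hV => hK.of_top_of_card_le (hcard ▸ hV) G⟩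
end
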